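/- Information leakage bound via single-index conditional entropies: let M, E, F, Y be finite random variables where (M,E,F) is determined by a vector S^{1:n} via disjoint index sets A (for (M,E)) and B (for F), with the components {Sⁱ}_{i∈A∪B} mutually independent and uniform on {0,1}. Then I(M,E; Y | F) ≤ ∑_{i∈A∪B} (1 − H(Sⁱ | Y, S^{1:i−1})). -/

import Mathlib

noncomputable def distOf {Ω α : Type*} [Fintype Ω] [DecidableEq α]
    (p : Ω → ℝ) (f : Ω → α) : α → ℝ :=
  fun a => ∑ ω ∈ Finset.univ.filter (fun ω => f ω = a), p ω

noncomputable def entOf {Ω α : Type*} [Fintype Ω] [Fintype α] [DecidableEq α]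
    (p : Ω → ℝ) (f : Ω → α) : ℝ :=
  (∑ a, Real.negMulLog (distOf p f a)) / Real.log 2

noncomputable def condEntOf {Ω α β : Type*} [Fintype Ω] [Fintype α] [DecidableEq α]
    [Fintype β] [DecidableEq β] (p : Ω → ℝ) (f : Ω → α) (g : Ω → β) : ℝ :=
  entOf p (fun ω => (f ω, g ω)) - entOf p g

/-- Conditional mutual information I(f ; g | h) = H(f|h) − H(f|g,h), in bits. -/
noncomputable def condMutInfoOf {Ω α β γ : Type*} [Fintype Ω] [Fintype α] [DecidableEq α]
    [Fintype β] [DecidableEq β] [Fintype γ] [DecidableEq γ]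
    (p : Ω → ℝ) (f : Ω → α) (g : Ω → β) (h : Ω → γ) : ℝ :=
  condEntOf p f h - condEntOf p f (fun ω => (g ω, h ω))

/-! The bits indexed by `A ∪ B` are uniform, so `H(M, E, F) = |A ∪ B|`. Since conditioning reduces
entropy (Gibbs' inequality), `I(M, E; Y | F) ≤ I(M, E, F; Y) = |A ∪ B| - H(S^{A ∪ B} | Y)`.
Peeling the indices of `A ∪ B` off from the largest one, the chain rule writes `H(S^{A ∪ B} | Y)`
as a sum of terms `H(Sⁱ | Y, S^{j ∈ A ∪ B, j < i})`, and each of them is at least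
`H(Sⁱ | Y, S^{1:i-1})`, which conditions on more. -/

open Real Finset

theorem mul_log_div_le_sub {q r : ℝ} (hq : 0 ≤ q) (hr : 0 ≤ r) (hqr : q ≠ 0 → r ≠ 0) :
    q * log (r / q) ≤ r - q := by
  rcases hq.eq_or_lt with rfl | hq
  · simpa using hr
  have hr : 0 < r := hr.lt_of_ne' (hqr hq.ne')
  calc q * log (r / q) ≤ q * (r / q - 1) :=
        mul_le_mul_of_nonneg_left (log_le_sub_one_of_pos (by positivity)) hq.le
    _ = r - q := by field_simp

theorem sum_mul_log_div_le {ι : Type*} (s : Finset ι) (q r : ι → ℝ)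
    (hq : ∀ i ∈ s, 0 ≤ q i) (hr : ∀ i ∈ s, 0 ≤ r i) (hqr : ∀ i ∈ s, q i ≠ 0 → r i ≠ 0) :
    ∑ i ∈ s, q i * log (r i / q i) ≤ ∑ i ∈ s, r i - ∑ i ∈ s, q i := by
  rw [← sum_sub_distrib]
  exact sum_le_sum fun i hi => mul_log_div_le_sub (hq i hi) (hr i hi) (hqr i hi)

section Distribution

variable {Ω α β δ : Type*} [Fintype Ω] [DecidableEq α] [DecidableEq β] [DecidableEq δ] (p : Ω → ℝ)

theorem sum_distOf_mul [Fintype α] (f : Ω → α) (u : α → ℝ) :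
    ∑ a, distOf p f a * u a = ∑ ω, p ω * u (f ω) := by
  simp only [distOf, sum_mul]
  rw [← sum_fiberwise univ f fun ω => p ω * u (f ω)]
  exact sum_congr rfl fun a _ => sum_congr rfl fun ω hω => by rw [(mem_filter.1 hω).2]

theorem sum_distOf [Fintype α] (hp1 : ∑ ω, p ω = 1) (f : Ω → α) : ∑ a, distOf p f a = 1 := by
  simpa [hp1] using sum_distOf_mul p f 1

theorem distOf_comp_of_injective (f : Ω → α) {e : α → β} (he : Function.Injective e) (a : α) :
    distOf p (fun ω => e (f ω)) (e a) = distOf p f a := by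
  simp only [distOf, he.eq_iff]

theorem sum_distOf_pair_left [Fintype α] (f : Ω → α) (g : Ω → β) (b : β) :
    ∑ a, distOf p (fun ω => (f ω, g ω)) (a, b) = distOf p g b := by
  simp only [distOf, sum_filter, Prod.ext_iff]
  rw [sum_comm]
  exact sum_congr rfl fun ω _ => by by_cases h : g ω = b <;> simp [h]

/-- `P(f, h) P(g, h) / P(h)`: the law of `((f, h), g)` under which `f` and `g` are conditionally
independent given `h`. -/
noncomputable def condIndepDistOf (f : Ω → α) (g : Ω → β) (h : Ω → δ) : (α × δ) × β → ℝ :=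
  fun x => distOf p (fun ω => (f ω, h ω)) x.1 * distOf p (fun ω => (g ω, h ω)) (x.2, x.1.2)
    / distOf p h x.1.2

variable {p}

theorem distOf_nonneg (hp : ∀ ω, 0 ≤ p ω) (f : Ω → α) (a : α) : 0 ≤ distOf p f a :=
  sum_nonneg fun ω _ => hp ω

theorem le_distOf_apply (hp : ∀ ω, 0 ≤ p ω) (f : Ω → α) (ω : Ω) : p ω ≤ distOf p f (f ω) :=
  single_le_sum (fun ω _ => hp ω) (by simp)

theorem distOf_le_distOf_comp (hp : ∀ ω, 0 ≤ p ω) (f : Ω → α) (φ : α → β) (a : α) :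
    distOf p f a ≤ distOf p (fun ω => φ (f ω)) (φ a) :=
  sum_le_sum_of_subset_of_nonneg
    (fun ω hω => by simp only [mem_filter, mem_univ, true_and] at hω ⊢; rw [hω])
    fun ω _ _ => hp ω

theorem condIndepDistOf_nonneg (hp : ∀ ω, 0 ≤ p ω) (f : Ω → α) (g : Ω → β) (h : Ω → δ)
    (x : (α × δ) × β) : 0 ≤ condIndepDistOf p f g h x :=
  div_nonneg (mul_nonneg (distOf_nonneg hp _ _) (distOf_nonneg hp _ _)) (distOf_nonneg hp _ _)

theorem condIndepDistOf_ne_zero (hp : ∀ ω, 0 ≤ p ω) (f : Ω → α) (g : Ω → β) (h : Ω → δ)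
    {x : (α × δ) × β} (hx : distOf p (fun ω => ((f ω, h ω), g ω)) x ≠ 0) :
    condIndepDistOf p f g h x ≠ 0 := by
  have hx : 0 < distOf p (fun ω => ((f ω, h ω), g ω)) x := (distOf_nonneg hp _ x).lt_of_ne' hx
  have h₁ := distOf_le_distOf_comp hp (fun ω => ((f ω, h ω), g ω)) Prod.fst x
  have h₂ := distOf_le_distOf_comp hp (fun ω => ((f ω, h ω), g ω)) (fun y => (y.2, y.1.2)) x
  have h₃ := distOf_le_distOf_comp hp (fun ω => ((f ω, h ω), g ω)) (fun y => y.1.2) x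
  exact (div_pos (mul_pos (hx.trans_le h₁) (hx.trans_le h₂)) (hx.trans_le h₃)).ne'

theorem sum_condIndepDistOf_le_one [Fintype α] [Fintype β] [Fintype δ]
    (hp : ∀ ω, 0 ≤ p ω) (hp1 : ∑ ω, p ω = 1) (f : Ω → α) (g : Ω → β) (h : Ω → δ) :
    ∑ x, condIndepDistOf p f g h x ≤ 1 :=
  calc ∑ x, condIndepDistOf p f g h x
      = ∑ y : α × δ, distOf p (fun ω => (f ω, h ω)) y * (distOf p h y.2 / distOf p h y.2) := by
        simp only [condIndepDistOf, Fintype.sum_prod_type, mul_div_assoc, ← mul_sum, ← sum_div,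
          sum_distOf_pair_left]
    _ ≤ ∑ y : α × δ, distOf p (fun ω => (f ω, h ω)) y :=
        sum_le_sum fun y _ => mul_le_of_le_one_right (distOf_nonneg hp _ _) (div_self_le_one _)
    _ = 1 := sum_distOf p hp1 _

end Distribution

section Entropy

variable {Ω α β δ : Type*} [Fintype Ω] [Fintype α] [DecidableEq α] [Fintype β] [DecidableEq β]
  [Fintype δ] [DecidableEq δ] {p : Ω → ℝ}

variable (p) in
theorem entOf_eq_neg_sum (f : Ω → α) :
    entOf p f = -(∑ ω, p ω * log (distOf p f (f ω))) / log 2 := by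
  rw [entOf, ← sum_distOf_mul p f fun a => log (distOf p f a), ← sum_neg_distrib]
  simp only [negMulLog, neg_mul]

variable (p) in
theorem entOf_comp_of_injective (f : Ω → α) {e : α → β} (he : Function.Injective e) :
    entOf p (fun ω => e (f ω)) = entOf p f := by
  simp only [entOf_eq_neg_sum, distOf_comp_of_injective p f he]

theorem entOf_comp_le (hp : ∀ ω, 0 ≤ p ω) (f : Ω → α) (φ : α → β) :
    entOf p (fun ω => φ (f ω)) ≤ entOf p f := by
  simp only [entOf_eq_neg_sum]
  refine div_le_div_of_nonneg_right (neg_le_neg (sum_le_sum fun ω _ => ?_)) (log_pos one_lt_two).le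
  rcases (hp ω).eq_or_lt with h0 | hpos
  · simp [← h0]
  · exact mul_le_mul_of_nonneg_left (log_le_log (hpos.trans_le (le_distOf_apply hp f ω))
      (distOf_le_distOf_comp hp f φ (f ω))) hpos.le

theorem entOf_eq_of_distOf_eq_half_pow (hp1 : ∑ ω, p ω = 1) (f : Ω → α) (k : ℕ)
    (hf : ∀ a, distOf p f a = (1 / 2) ^ k) : entOf p f = k := by
  simp only [entOf_eq_neg_sum, hf, one_div, inv_pow, log_inv, log_pow, ← sum_mul, hp1]
  field_simp

variable (p) in
theorem condEntOf_comp_of_injective_left (f : Ω → α) (h : Ω → δ) {e : α → β}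
    (he : Function.Injective e) : condEntOf p (fun ω => e (f ω)) h = condEntOf p f h := by
  rw [condEntOf, condEntOf,
    ← entOf_comp_of_injective p (fun ω => (f ω, h ω)) (he.prodMap Function.injective_id)]
  rfl

theorem condEntOf_nonneg (hp : ∀ ω, 0 ≤ p ω) (f : Ω → α) (h : Ω → δ) : 0 ≤ condEntOf p f h :=
  sub_nonneg.2 (entOf_comp_le hp (fun ω => (f ω, h ω)) Prod.snd)

/-- Gibbs' inequality against `condIndepDistOf` is the nonnegativity of `I(f; g | h)`. -/
theorem condEntOf_pair_le (hp : ∀ ω, 0 ≤ p ω) (hp1 : ∑ ω, p ω = 1)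
    (f : Ω → α) (g : Ω → β) (h : Ω → δ) :
    condEntOf p f (fun ω => (g ω, h ω)) ≤ condEntOf p f h := by
  set X : Ω → (α × δ) × β := fun ω => ((f ω, h ω), g ω)
  set r := condIndepDistOf p f g h
  have hgibbs : ∑ x, distOf p X x * log (r x / distOf p X x) ≤ 0 := by
    refine (sum_mul_log_div_le _ _ _ (fun x _ => distOf_nonneg hp X x)
      (fun x _ => condIndepDistOf_nonneg hp f g h x)
      (fun x _ => condIndepDistOf_ne_zero hp f g h)).trans ?_
    linarith [sum_distOf p hp1 X, sum_condIndepDistOf_le_one hp hp1 f g h]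
  have hsurprisal : ∑ x, distOf p X x * log (r x / distOf p X x)
      = ∑ ω, p ω * log (distOf p (fun ω => (f ω, h ω)) (f ω, h ω))
        + ∑ ω, p ω * log (distOf p (fun ω => (g ω, h ω)) (g ω, h ω))
        - ∑ ω, p ω * log (distOf p h (h ω)) - ∑ ω, p ω * log (distOf p X (X ω)) := by
    simp only [sum_distOf_mul, ← sum_add_distrib, ← sum_sub_distrib, ← mul_add, ← mul_sub]
    refine sum_congr rfl fun ω _ => ?_
    rcases (hp ω).eq_or_lt with h0 | hpos
    · simp [← h0]
    have h₁ := (hpos.trans_le (le_distOf_apply hp (fun ω => (f ω, h ω)) ω)).ne'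
    have h₂ := (hpos.trans_le (le_distOf_apply hp (fun ω => (g ω, h ω)) ω)).ne'
    have h₃ := (hpos.trans_le (le_distOf_apply hp h ω)).ne'
    have h₄ := (hpos.trans_le (le_distOf_apply hp X ω)).ne'
    rw [show r (X ω) = _ * _ / _ from rfl, log_div (div_ne_zero (mul_ne_zero h₁ h₂) h₃) h₄,
      log_div (mul_ne_zero h₁ h₂) h₃, log_mul h₁ h₂]
  have hX : entOf p X = entOf p (fun ω => (f ω, g ω, h ω)) :=
    (entOf_comp_of_injective p X (e := fun x => (x.1.1, x.2, x.1.2))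
      fun x y hxy => by simp_all [Prod.ext_iff]).symm
  simp only [condEntOf, ← hX, entOf_eq_neg_sum]
  rw [← sub_nonneg]
  have key : 0 ≤ -(∑ x, distOf p X x * log (r x / distOf p X x)) / log 2 :=
    div_nonneg (neg_nonneg.2 hgibbs) (log_pos one_lt_two).le
  convert key using 1
  rw [hsurprisal]
  ring

theorem entOf_const (hp1 : ∑ ω, p ω = 1) (c : α) : entOf p (fun _ => c) = 0 := by
  simp [entOf_eq_neg_sum, distOf, hp1]

theorem condEntOf_le_condEntOf_comp (hp : ∀ ω, 0 ≤ p ω) (hp1 : ∑ ω, p ω = 1)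
    (f : Ω → α) (h : Ω → δ) (φ : δ → β) :
    condEntOf p f h ≤ condEntOf p f (fun ω => φ (h ω)) := by
  have hgraph : Function.Injective fun c : δ => (c, φ c) := fun c c' hc => congrArg Prod.fst hc
  calc condEntOf p f h = condEntOf p f (fun ω => (h ω, φ (h ω))) := by
        rw [condEntOf, condEntOf,
          ← entOf_comp_of_injective p h hgraph,
          ← entOf_comp_of_injective p (fun ω => (f ω, h ω)) (Function.injective_id.prodMap hgraph)]
        rfl
    _ ≤ condEntOf p f (fun ω => φ (h ω)) := condEntOf_pair_le hp hp1 f h _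

theorem condEntOf_le_entOf (hp : ∀ ω, 0 ≤ p ω) (hp1 : ∑ ω, p ω = 1) (f : Ω → α) (h : Ω → δ) :
    condEntOf p f h ≤ entOf p f := by
  refine (condEntOf_le_condEntOf_comp hp hp1 f h fun _ => ()).trans_eq ?_
  rw [condEntOf, entOf_const hp1, sub_zero,
    ← entOf_comp_of_injective p f (e := fun a => (a, ())) fun a a' ha => congrArg Prod.fst ha]

variable (p) in
theorem condEntOf_pair_eq_add (f : Ω → α) (g : Ω → β) (h : Ω → δ) :
    condEntOf p (fun ω => (f ω, g ω)) h
      = condEntOf p g h + condEntOf p f (fun ω => (g ω, h ω)) := by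
  have hassoc : entOf p (fun ω => (f ω, g ω, h ω)) = entOf p (fun ω => ((f ω, g ω), h ω)) :=
    entOf_comp_of_injective p (fun ω => ((f ω, g ω), h ω)) (e := fun x => (x.1.1, x.1.2, x.2))
      fun x y hxy => by simp_all [Prod.ext_iff]
  rw [condEntOf, condEntOf, condEntOf, ← hassoc]
  ring

theorem condMutInfoOf_le_entOf_sub_condEntOf (hp : ∀ ω, 0 ≤ p ω) (hp1 : ∑ ω, p ω = 1)
    (f : Ω → α) (g : Ω → β) (h : Ω → δ) :
    condMutInfoOf p f g h
      ≤ entOf p (fun ω => (f ω, h ω)) - condEntOf p (fun ω => (f ω, h ω)) g := by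
  have hswap := entOf_comp_of_injective p (fun ω => ((f ω, h ω), g ω))
    (e := fun x => (x.1.1, x.2, x.1.2)) fun x y hxy => by simp_all [Prod.ext_iff]
  have hgh := condEntOf_le_entOf hp hp1 g h
  simp only [condMutInfoOf, condEntOf, ← hswap] at hgh ⊢
  linarith

end Entropy

theorem sum_condEntOf_le_condEntOf_restrict {Ω X γ : Type*} [Fintype Ω] [Fintype X]
    [DecidableEq X] [Fintype γ] [DecidableEq γ] {p : Ω → ℝ} (hp : ∀ ω, 0 ≤ p ω)
    (hp1 : ∑ ω, p ω = 1) {n : ℕ} (S : Fin n → Ω → X) (Y : Ω → γ) (C : Finset (Fin n)) :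
    ∑ i ∈ C, condEntOf p (S i) (fun ω => (Y ω, fun j : Fin i.1 => S (Fin.castLE i.2.le j) ω))
      ≤ condEntOf p (fun ω (i : C) => S i.1 ω) Y := by
  induction C using Finset.induction_on_max with
  | empty => simpa using condEntOf_nonneg hp _ Y
  | insert i C hlt ih =>
    have hsplit : Function.Injective fun v : ↥(insert i C) → X =>
        (v ⟨i, mem_insert_self i C⟩, fun k : C => v ⟨k, mem_insert_of_mem k.2⟩) := by
      intro v w hvw
      simp only [Prod.mk.injEq] at hvw
      funext ⟨k, hk⟩
      rcases mem_insert.1 hk with rfl | hk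
      · exact hvw.1
      · exact congrFun hvw.2 ⟨k, hk⟩
    have hmono : condEntOf p (S i) (fun ω => (Y ω, fun j : Fin i.1 => S (Fin.castLE i.2.le j) ω))
        ≤ condEntOf p (S i) (fun ω => (fun k : C => S k.1 ω, Y ω)) :=
      condEntOf_le_condEntOf_comp hp hp1 (S i)
        (fun ω => (Y ω, fun j : Fin i.1 => S (Fin.castLE i.2.le j) ω))
        fun x => (fun k : C => x.2 ⟨k.1, hlt k k.2⟩, x.1)
    rw [sum_insert fun hi => lt_irrefl i (hlt i hi),
      ← condEntOf_comp_of_injective_left p _ Y hsplit, condEntOf_pair_eq_add]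
    linarith

theorem single_index_leakage_bound_general {Ω γ : Type*} [Fintype Ω] [Fintype γ] [DecidableEq γ]
    (n : ℕ) (p : Ω → ℝ) (hp : ∀ ω, 0 ≤ p ω) (hp1 : ∑ ω, p ω = 1)
    (S : Fin n → Ω → Bool) (A B : Finset (Fin n))
    (Y : Ω → γ)
    (hunif : ∀ v : {x // x ∈ A ∪ B} → Bool,
      distOf p (fun ω => fun i : {x // x ∈ A ∪ B} => S i.1 ω) v
        = (1/2 : ℝ) ^ (A ∪ B).card) :
    condMutInfoOf p (fun ω => fun i : {x // x ∈ A} => S i.1 ω) Y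
        (fun ω => fun i : {x // x ∈ B} => S i.1 ω)
      ≤ ∑ i ∈ A ∪ B,
          (1 - condEntOf p (S i)
            (fun ω => (Y ω, fun j : Fin i.1 => S (Fin.castLE i.2.le j) ω))) := by
  set T := fun ω (i : ↥(A ∪ B)) => S i.1 ω
  have hsplit : Function.Injective fun v : ↥(A ∪ B) → Bool =>
      (fun i : A => v ⟨i, mem_union_left B i.2⟩, fun i : B => v ⟨i, mem_union_right A i.2⟩) := by
    intro v w hvw
    simp only [Prod.mk.injEq] at hvw
    funext ⟨k, hk⟩
    rcases mem_union.1 hk with hk | hk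
    · exact congrFun hvw.1 ⟨k, hk⟩
    · exact congrFun hvw.2 ⟨k, hk⟩
  calc _ ≤ entOf p (fun ω => (fun i : A => S i.1 ω, fun i : B => S i.1 ω))
        - condEntOf p (fun ω => (fun i : A => S i.1 ω, fun i : B => S i.1 ω)) Y :=
        condMutInfoOf_le_entOf_sub_condEntOf hp hp1 _ _ _
    _ = (A ∪ B).card - condEntOf p T Y := by
        rw [entOf_comp_of_injective p T hsplit, condEntOf_comp_of_injective_left p T Y hsplit,
          entOf_eq_of_distOf_eq_half_pow hp1 T _ hunif]
    _ ≤ (A ∪ B).card - ∑ i ∈ A ∪ B, condEntOf p (S i)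
          (fun ω => (Y ω, fun j : Fin i.1 => S (Fin.castLE i.2.le j) ω)) :=
        sub_le_sub_left (sum_condEntOf_le_condEntOf_restrict hp hp1 S Y _) _
    _ = _ := by rw [sum_sub_distrib, sum_const, nsmul_one]

/-- if (M,E) consists of the bits {Sⁱ}_{i∈A} and F of {Sⁱ}_{i∈B},
with A,B disjoint and the bits {Sⁱ}_{i∈A∪B} i.i.d. uniform, then
I(M,E; Y | F) ≤ ∑_{i∈A∪B} (1 − H(Sⁱ | Y, S^{1:i−1})). -/
theorem single_index_leakage_bound {Ω γ : Type*} [Fintype Ω] [Fintype γ] [DecidableEq γ]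
    (n : ℕ) (p : Ω → ℝ) (hp : ∀ ω, 0 ≤ p ω) (hp1 : ∑ ω, p ω = 1)
    (S : Fin n → Ω → Bool) (A B : Finset (Fin n)) (hAB : Disjoint A B)
    (Y : Ω → γ)
    (hunif : ∀ v : {x // x ∈ A ∪ B} → Bool,
      distOf p (fun ω => fun i : {x // x ∈ A ∪ B} => S i.1 ω) v
        = (1/2 : ℝ) ^ (A ∪ B).card) :
    condMutInfoOf p (fun ω => fun i : {x // x ∈ A} => S i.1 ω) Y
        (fun ω => fun i : {x // x ∈ B} => S i.1 ω)
      ≤ ∑ i ∈ A ∪ B,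
          (1 - condEntOf p (S i)
            (fun ω => (Y ω, fun j : Fin i.1 => S (Fin.castLE i.2.le j) ω))) :=
  single_index_leakage_bound_general n p hp hp1 S A B Y hunif
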